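/- Let k be a field of characteristic 2 and r ≥ 1. Consider the quotient k-algebra homomorphism from k[s_1,…,s_r,t_1,…,t_r] to k[x_1,…,x_{r−1},t_1,…,t_r] sending s_i ↦ x_i for 1 ≤ i ≤ r−1, s_r ↦ x_1+⋯+x_{r−1}, and t_i ↦ t_i. Then for 1 ≤ a ≤ r−1, the element ∑_{1≤i_1<⋯<i_a≤r}(∑_{j=1}^a s_{i_j} + ∑_{m=1}^r s_m) t_{i_1}⋯t_{i_a} maps to ∑_{j=1}^{r−1} x_j (t_j + t_r) · e_{a−1}(t_1,…,\hat{t_j},…,t_{r−1}). -/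

import Mathlib

/-! Write `y_i` for the image of `s_i`. Since `y_r = y_1 + ⋯ + y_{r-1}` and `2 = 0`, the total
`∑_m y_m` vanishes, and double counting turns the image into `∑_i y_i t_i e_{a-1}(t̂_i)`.
Substituting `y_r = ∑_j x_j` pairs the `j`-th term with a share of the `r`-th one, and
`t_j e_b(t̂_j) + t_r e_b(t̂_r) = (t_j + t_r) e_b(t̂_j, t̂_r)` since the cross terms
`2 t_j t_r e_{b-1}(t̂_j, t̂_r)` vanish. -/

open MvPolynomial Finset

namespace Multiset

variable {R : Type*} [CommRing R]

theorem esymm_cons_succ (a : R) (s : Multiset R) (n : ℕ) :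
    (a ::ₘ s).esymm (n + 1) = s.esymm (n + 1) + a * s.esymm n := by
  simp [esymm, powersetCard_cons, map_map, sum_map_mul_left]

theorem mul_esymm_cons_add_mul_esymm_cons [CharP R 2] (a b : R) (s : Multiset R) (n : ℕ) :
    a * (b ::ₘ s).esymm n + b * (a ::ₘ s).esymm n = (a + b) * s.esymm n := by
  cases n with
  | zero => simp [esymm, powersetCard_zero_left]
  | succ n =>
    rw [esymm_cons_succ, esymm_cons_succ]
    linear_combination (a * b * s.esymm n) * CharTwo.two_eq_zero (R := R)

end Multiset

namespace Finset

theorem sum_powersetCard_succ_sum_mul_prod {ι R : Type*} [CommRing R] [DecidableEq ι]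
    (S : Finset ι) (c t : ι → R) (n : ℕ) :
    ∑ T ∈ S.powersetCard (n + 1), (∑ i ∈ T, c i) * ∏ i ∈ T, t i =
      ∑ i ∈ S, c i * t i * ((S.erase i).val.map t).esymm n := by
  simp_rw [sum_mul, esymm_map_val, mul_sum]
  rw [sum_comm' (t' := S) (s' := fun i => (S.powersetCard (n + 1)).filter (i ∈ ·))]
  · refine sum_congr rfl fun i hi => ?_
    refine sum_nbij' (·.erase i) (insert i) ?_ ?_ ?_ ?_ ?_
    · simp only [mem_filter, mem_powersetCard, and_imp]
      intro T hTS hT hiT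
      exact ⟨erase_subset_erase i hTS, by rw [card_erase_of_mem hiT, hT]; rfl⟩
    · simp only [mem_filter, mem_powersetCard, and_imp]
      intro U hUS hU
      have hiU : i ∉ U := fun h => notMem_erase i S (hUS h)
      refine ⟨⟨insert_subset hi (hUS.trans (erase_subset i S)), ?_⟩, mem_insert_self i U⟩
      rw [card_insert_of_notMem hiU, hU]
    · intro T hT
      exact insert_erase (mem_filter.mp hT).2
    · intro U hU
      exact erase_insert fun h => notMem_erase i S ((mem_powersetCard.mp hU).1 h)
    · intro T hT
      rw [mul_assoc, mul_prod_erase T t (mem_filter.mp hT).2]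
  · intro T i
    simp only [mem_powersetCard, mem_filter]
    constructor
    · rintro ⟨⟨hTS, hT⟩, hi⟩; exact ⟨⟨⟨hTS, hT⟩, hi⟩, hTS hi⟩
    · rintro ⟨⟨⟨hTS, hT⟩, hi⟩, -⟩; exact ⟨⟨hTS, hT⟩, hi⟩

theorem map_val_eq_cons_erase {ι β : Type*} [DecidableEq ι] (t : ι → β) {S : Finset ι}
    {i : ι} (hi : i ∈ S) : S.val.map t = t i ::ₘ (S.erase i).val.map t := by
  rw [← Multiset.map_cons, erase_val, Multiset.cons_erase (mem_val.mpr hi)]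

end Finset

theorem Fin.map_val_erase_castSucc_erase_last {β : Type*} {m : ℕ} (t : Fin (m + 1) → β)
    (j : Fin m) :
    (((univ : Finset (Fin (m + 1))).erase j.castSucc).erase (last m)).val.map t =
      (univ.erase j).val.map fun i => t i.castSucc := by
  rw [erase_right_comm, Fin.univ_castSuccEmb, erase_cons, ← coe_castSuccEmb, ← map_erase,
    map_val, Multiset.map_map]
  rfl

theorem sum_powersetCard_sum_add_sum_mul_prod {R : Type*} [CommRing R] [CharP R 2] {m : ℕ}
    (x : Fin m → R) (y t : Fin (m + 1) → R)
    (hy : ∀ j, y j.castSucc = x j) (hlast : y (Fin.last m) = ∑ j, x j) (n : ℕ) :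
    ∑ T ∈ (univ : Finset (Fin (m + 1))).powersetCard (n + 1),
        (∑ i ∈ T, y i + ∑ i, y i) * ∏ i ∈ T, t i =
      ∑ j, x j * (t j.castSucc + t (Fin.last m)) *
        ∑ T ∈ (univ.erase j).powersetCard n, ∏ i ∈ T, t i.castSucc := by
  have hy_sum : ∑ i, y i = 0 := by
    simp only [Fin.sum_univ_castSucc, hy, hlast, CharTwo.add_self_eq_zero]
  simp only [hy_sum, add_zero]
  rw [sum_powersetCard_succ_sum_mul_prod, Fin.sum_univ_castSucc, hlast, sum_mul, sum_mul,
    ← sum_add_distrib]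
  refine sum_congr rfl fun j _ => ?_
  have hne : j.castSucc ≠ Fin.last m := (Fin.castSucc_lt_last j).ne
  set M := (univ.erase j).val.map fun i => t i.castSucc
  have h₁ : (univ.erase j.castSucc).val.map t = t (Fin.last m) ::ₘ M := by
    rw [map_val_eq_cons_erase t (mem_erase.mpr ⟨hne.symm, mem_univ _⟩),
      Fin.map_val_erase_castSucc_erase_last]
  have h₂ : (univ.erase (Fin.last m)).val.map t = t j.castSucc ::ₘ M := by
    rw [map_val_eq_cons_erase t (mem_erase.mpr ⟨hne, mem_univ _⟩), erase_right_comm,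
      Fin.map_val_erase_castSucc_erase_last]
  rw [hy, h₁, h₂]
  have key := Multiset.mul_esymm_cons_add_mul_esymm_cons (t j.castSucc) (t (Fin.last m)) M n
  rw [esymm_map_val] at key
  linear_combination x j * key

/-- Let `k` be a field of characteristic 2 and `r ≥ 1`. Under
the `k`-algebra homomorphism `k[s₁,…,s_r,t₁,…,t_r] → k[x₁,…,x_{r−1},t₁,…,t_r]`
sending `s_i ↦ x_i` (`1 ≤ i ≤ r−1`), `s_r ↦ x₁+⋯+x_{r−1}`, `t_i ↦ t_i`, the
element `∑_{i₁<⋯<i_a} (∑_j s_{i_j} + ∑_m s_m) t_{i₁}⋯t_{i_a}` (for `1 ≤ a ≤ r−1`)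
maps to `∑_{j=1}^{r−1} x_j (t_j + t_r) · e_{a−1}(t₁,…,t̂_j,…,t_{r−1})`.
`Sum.inl`/`Sum.inr` index the `s`/`t` (resp. `x`/`t`) variables. -/
theorem restriction_of_odd_u_classes
    (k : Type*) [Field k] [CharP k 2] (r : ℕ) (hr : 1 ≤ r) (a : ℕ) (ha : 1 ≤ a) :
    MvPolynomial.aeval (R := k)
        (fun v : Fin r ⊕ Fin r =>
          match v with
          | Sum.inl i =>
              if h : (i : ℕ) < r - 1 then
                (X (Sum.inl (⟨(i : ℕ), h⟩ : Fin (r - 1))) :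
                  MvPolynomial (Fin (r - 1) ⊕ Fin r) k)
              else ∑ j : Fin (r - 1), X (Sum.inl j)
          | Sum.inr i => X (Sum.inr i))
        (∑ s ∈ Finset.powersetCard a (Finset.univ : Finset (Fin r)),
          ((∑ i ∈ s, X (Sum.inl i)) + ∑ m : Fin r, X (Sum.inl m)) *
            ∏ i ∈ s, X (Sum.inr i)) =
      ∑ j : Fin (r - 1),
        X (Sum.inl j) *
          (X (Sum.inr (Fin.castLE (Nat.sub_le r 1) j)) +
            X (Sum.inr (⟨r - 1, by omega⟩ : Fin r))) *
          ∑ s ∈ Finset.powersetCard (a - 1)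
              ((Finset.univ : Finset (Fin (r - 1))).erase j),
            ∏ i ∈ s, X (Sum.inr (Fin.castLE (Nat.sub_le r 1) i)) := by
  obtain ⟨m, rfl⟩ : ∃ m, r = m + 1 := ⟨r - 1, by omega⟩
  obtain ⟨n, rfl⟩ : ∃ n, a = n + 1 := ⟨a - 1, by omega⟩
  simp only [map_sum, map_mul, map_add, map_prod, aeval_X]
  exact sum_powersetCard_sum_add_sum_mul_prod (fun j => X (Sum.inl j)) _
    (fun i => X (Sum.inr i)) (fun j => by simp) (by simp) n
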